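/- arXiv:2005.00713 — 6 statements merged into one kernel-verified Lean document; each statement's English description precedes it below -/
import Mathlib

section
/- Let f be analytic on the unit disk D with S := sup_{ζ∈D} (1-|ζ|²)|f'(ζ)| < ∞ (i.e. f in the Bloch space). Then there is an absolute constant C such that for all z, w ∈ D: |(1-|z|²)f'(z) - (1-|w|²)f'(w)| ≤ C·S·ρ(z,w), where ρ(z,w) = |z-w|/|1-conj(w)z| is the pseudo-hyperbolic distance. -/
open Metric Set ComplexConjugate

/-! Write `δ = 1 - ‖z‖` and `d = ‖z - w‖`. Since `1 - w̄z = (1 - |z|²) + conj (z - w) z`, the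
denominator of `ρ(z, w) = d / |1 - w̄z|` is at most `2δ + d`. If `d ≥ δ / 2` then `ρ ≥ 1/5`,
and the trivial bound `2S` suffices. If `d < δ / 2`, the Bloch bound makes `f'` bounded by `2S/δ`
on the disk `B(z, δ/2)`, so by the Schwarz lemma `f'` is `8S/δ²`-Lipschitz at `z` there; this
controls `(1-|z|²)(f'(z) - f'(w))`, while the change of the weight contributes
`||w|² - |z|²| |f'(w)| ≤ 2d · 2S/δ`. -/

lemma norm_one_sub_conj_mul_le {z : ℂ} (hz : ‖z‖ ≤ 1) (w : ℂ) :
    ‖1 - conj w * z‖ ≤ (1 - ‖z‖ ^ 2) + ‖z - w‖ := by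
  have h : 1 - conj w * z = ((1 - ‖z‖ ^ 2 : ℝ) : ℂ) + conj (z - w) * z := by
    rw [map_sub, sub_mul, Complex.conj_mul']; push_cast; ring
  have hz2 : 0 ≤ 1 - ‖z‖ ^ 2 := by nlinarith [norm_nonneg z]
  calc ‖1 - conj w * z‖ ≤ (1 - ‖z‖ ^ 2) + ‖z - w‖ * ‖z‖ := by
        rw [h]
        refine (norm_add_le _ _).trans_eq ?_
        rw [Complex.norm_real, Real.norm_of_nonneg hz2, norm_mul, Complex.norm_conj]
    _ ≤ (1 - ‖z‖ ^ 2) + ‖z - w‖ := by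
        gcongr; exact mul_le_of_le_one_right (norm_nonneg _) hz

lemma lt_one_sub_norm_of_mem_ball {z u : ℂ} {r : ℝ} (hr : 2 * r ≤ 1 - ‖z‖)
    (hu : u ∈ ball z r) : r < 1 - ‖u‖ := by
  rw [mem_ball, dist_eq_norm] at hu
  linarith [norm_le_norm_add_norm_sub' u z]

section WeightedBound

variable {g : ℂ → ℂ} {S : ℝ}

lemma norm_le_div_of_mem_ball (hS : ∀ ζ ∈ ball (0:ℂ) 1, (1 - ‖ζ‖ ^ 2) * ‖g ζ‖ ≤ S)
    {z u : ℂ} {r : ℝ} (hr : 2 * r ≤ 1 - ‖z‖) (hu : u ∈ ball z r) : ‖g u‖ ≤ S / r := by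
  have hru := lt_one_sub_norm_of_mem_ball hr hu
  have hr0 : 0 < r := nonempty_ball.mp ⟨u, hu⟩
  have hu1 : ‖u‖ < 1 := by linarith
  rw [le_div_iff₀ hr0]
  calc ‖g u‖ * r ≤ (1 - ‖u‖ ^ 2) * ‖g u‖ := by
        rw [mul_comm]; gcongr; nlinarith [norm_nonneg u]
    _ ≤ S := hS u (mem_ball_zero_iff.mpr hu1)

lemma norm_sub_le_of_mem_ball (hg : DifferentiableOn ℂ g (ball 0 1))
    (hS : ∀ ζ ∈ ball (0:ℂ) 1, (1 - ‖ζ‖ ^ 2) * ‖g ζ‖ ≤ S)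
    {z w : ℂ} {r : ℝ} (hr : 2 * r ≤ 1 - ‖z‖) (hw : w ∈ ball z r) :
    ‖g w - g z‖ ≤ 2 * S / r ^ 2 * ‖w - z‖ := by
  have hr0 : 0 < r := nonempty_ball.mp ⟨w, hw⟩
  have hsub : ball z r ⊆ ball 0 1 := fun u hu ↦
    mem_ball_zero_iff.mpr (by linarith [lt_one_sub_norm_of_mem_ball hr hu])
  have hmaps : MapsTo g (ball z r) (closedBall (g z) (2 * S / r)) := fun u hu ↦ by
    rw [mem_closedBall, dist_eq_norm]
    calc ‖g u - g z‖ ≤ ‖g u‖ + ‖g z‖ := norm_sub_le _ _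
      _ ≤ S / r + S / r := add_le_add (norm_le_div_of_mem_ball hS hr hu)
          (norm_le_div_of_mem_ball hS hr (mem_ball_self hr0))
      _ = 2 * S / r := by ring
  have := Complex.dist_le_div_mul_dist_of_mapsTo_ball (hg.mono hsub) hmaps hw
  rw [dist_eq_norm, dist_eq_norm] at this
  exact this.trans_eq (by field_simp)

lemma norm_weight_mul_le (hS : ∀ ζ ∈ ball (0:ℂ) 1, (1 - ‖ζ‖ ^ 2) * ‖g ζ‖ ≤ S)
    {z : ℂ} (hz : z ∈ ball (0:ℂ) 1) : ‖((1 - ‖z‖ ^ 2 : ℝ) : ℂ) * g z‖ ≤ S := by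
  have hz2 : 0 ≤ 1 - ‖z‖ ^ 2 := by nlinarith [norm_nonneg z, mem_ball_zero_iff.mp hz]
  rw [norm_mul, Complex.norm_real, Real.norm_of_nonneg hz2]
  exact hS z hz

lemma norm_weighted_sub_le_of_norm_sub_lt (hg : DifferentiableOn ℂ g (ball 0 1))
    (hS : ∀ ζ ∈ ball (0:ℂ) 1, (1 - ‖ζ‖ ^ 2) * ‖g ζ‖ ≤ S)
    {z w : ℂ} (hz : ‖z‖ < 1) (hzw : ‖z - w‖ < (1 - ‖z‖) / 2) :
    ‖((1 - ‖z‖ ^ 2 : ℝ) : ℂ) * g z - ((1 - ‖w‖ ^ 2 : ℝ) : ℂ) * g w‖ ≤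
      20 * S * ‖z - w‖ / (1 - ‖z‖) := by
  set r := (1 - ‖z‖) / 2 with hr
  set d := ‖z - w‖
  have hr0 : 0 < r := by linarith
  have hr2 : 2 * r ≤ 1 - ‖z‖ := by linarith
  have hz2 : 0 ≤ 1 - ‖z‖ ^ 2 := by nlinarith [norm_nonneg z]
  have hw : w ∈ ball z r := by rwa [mem_ball, dist_comm, dist_eq_norm]
  have hgw := norm_le_div_of_mem_ball hS hr2 hw
  have hS0 : 0 ≤ S := (mul_nonneg hz2 (norm_nonneg _)).trans (hS z (mem_ball_zero_iff.mpr hz))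
  have hlip : ‖g z - g w‖ ≤ 2 * S / r ^ 2 * d := by
    rw [norm_sub_rev]; simpa only [d, norm_sub_rev w z] using norm_sub_le_of_mem_ball hg hS hr2 hw
  have hweight : |‖w‖ ^ 2 - ‖z‖ ^ 2| ≤ 2 * d := by
    have hwz : |‖w‖ - ‖z‖| ≤ d := (abs_norm_sub_norm_le w z).trans_eq (norm_sub_rev w z)
    have hw1 : ‖w‖ < 1 := by linarith [lt_one_sub_norm_of_mem_ball hr2 hw]
    rw [sq_sub_sq, abs_mul, abs_of_nonneg (by positivity)]
    nlinarith [abs_nonneg (‖w‖ - ‖z‖)]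
  have hsplit : ((1 - ‖z‖ ^ 2 : ℝ) : ℂ) * g z - ((1 - ‖w‖ ^ 2 : ℝ) : ℂ) * g w =
      ((1 - ‖z‖ ^ 2 : ℝ) : ℂ) * (g z - g w) + ((‖w‖ ^ 2 - ‖z‖ ^ 2 : ℝ) : ℂ) * g w := by
    push_cast; ring
  calc _ ≤ (1 - ‖z‖ ^ 2) * ‖g z - g w‖ + |‖w‖ ^ 2 - ‖z‖ ^ 2| * ‖g w‖ := by
        rw [hsplit]
        refine (norm_add_le _ _).trans_eq ?_
        rw [norm_mul, norm_mul, Complex.norm_real, Complex.norm_real, Real.norm_of_nonneg hz2,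
          Real.norm_eq_abs]
    _ ≤ 4 * r * (2 * S / r ^ 2 * d) + 2 * d * (S / r) := by
        gcongr; nlinarith [norm_nonneg z]
    _ = 20 * S * d / (1 - ‖z‖) := by rw [hr]; field_simp; ring

end WeightedBound

/-- Lipschitz-type estimate for Bloch functions with respect to the
pseudo-hyperbolic distance. -/
theorem stmt_3 :
    ∃ C > 0, ∀ (f : ℂ → ℂ) (S : ℝ),
      DifferentiableOn ℂ f (ball (0:ℂ) 1) →
      (∀ ζ ∈ ball (0:ℂ) 1, (1 - ‖ζ‖ ^ 2) * ‖deriv f ζ‖ ≤ S) →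
      ∀ z ∈ ball (0:ℂ) 1, ∀ w ∈ ball (0:ℂ) 1,
        ‖((1 - ‖z‖ ^ 2 : ℝ) : ℂ) * deriv f z - ((1 - ‖w‖ ^ 2 : ℝ) : ℂ) * deriv f w‖ ≤
          C * S * ‖(z - w) / (1 - (starRingEnd ℂ) w * z)‖ := by
  refine ⟨50, by norm_num, fun f S hf hS z hz w hw ↦ ?_⟩
  have hz1 : ‖z‖ < 1 := mem_ball_zero_iff.mp hz
  have hw1 : ‖w‖ < 1 := mem_ball_zero_iff.mp hw
  have hS0 : 0 ≤ S := (norm_nonneg _).trans (norm_weight_mul_le hS hz)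
  have hA0 : 0 < ‖1 - conj w * z‖ := by
    have := norm_sub_norm_le (1 : ℂ) (conj w * z)
    rw [norm_one, norm_mul, Complex.norm_conj] at this
    nlinarith [norm_nonneg w, norm_nonneg z]
  have hA : ‖1 - conj w * z‖ ≤ 2 * (1 - ‖z‖) + ‖z - w‖ := by
    nlinarith [norm_one_sub_conj_mul_le hz1.le w, norm_nonneg z]
  rw [norm_div, ← mul_div_assoc]
  rcases lt_or_ge ‖z - w‖ ((1 - ‖z‖) / 2) with hnear | hfar
  · calc _ ≤ 20 * S * ‖z - w‖ / (1 - ‖z‖) :=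
          norm_weighted_sub_le_of_norm_sub_lt (hf.deriv isOpen_ball) hS hz1 hnear
      _ ≤ 50 * S * ‖z - w‖ / ‖1 - conj w * z‖ := by
          rw [div_le_div_iff₀ (by linarith) hA0]
          nlinarith [mul_nonneg hS0 (norm_nonneg (z - w))]
  · calc _ ≤ S + S :=
          (norm_sub_le _ _).trans (add_le_add (norm_weight_mul_le hS hz) (norm_weight_mul_le hS hw))
      _ ≤ 50 * S * ‖z - w‖ / ‖1 - conj w * z‖ := by
          rw [le_div_iff₀ hA0]
          nlinarith
end

section
/- Let ν be a positive continuous radial weight on D. Suppose φ, ψ : D → D are analytic with: (i) ν(z)|φ'(z) - ψ'(z)| → 0 as |z| → 1⁻, and (ii) ν(z)|φ(z)φ'(z) - ψ(z)ψ'(z)| → 0 as |z| → 1⁻. Then ν(z)|φ(z) - ψ(z)|·max{|φ'(z)|, |ψ'(z)|} → 0 as |z| → 1⁻. -/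
set_option autoImplicit false

open Metric

/-!
Pointwise, `(φ - ψ) φ' = (φ φ' - ψ ψ') - ψ (φ' - ψ')` and `(φ - ψ) ψ' = (φ φ' - ψ ψ') - φ (φ' - ψ')`;
since `|φ|, |ψ| ≤ 1`, both are bounded by `|φ φ' - ψ ψ'| + |φ' - ψ'|`, and multiplying by `ν`
gives the sum of the two quantities that vanish at the boundary by (i) and (ii).
-/

theorem norm_sub_mul_max_le {𝕜 : Type*} [NormedDivisionRing 𝕜] {a b a' b' : 𝕜}
    (ha : ‖a‖ ≤ 1) (hb : ‖b‖ ≤ 1) :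
    ‖a - b‖ * max ‖a'‖ ‖b'‖ ≤ ‖a * a' - b * b'‖ + ‖a' - b'‖ := by
  have bound (c x : 𝕜) (hc : ‖c‖ ≤ 1) (hx : (a - b) * x = (a * a' - b * b') - c * (a' - b')) :
      ‖a - b‖ * ‖x‖ ≤ ‖a * a' - b * b'‖ + ‖a' - b'‖ :=
    calc ‖a - b‖ * ‖x‖ = ‖(a * a' - b * b') - c * (a' - b')‖ := by rw [← norm_mul, hx]
      _ ≤ ‖a * a' - b * b'‖ + ‖c‖ * ‖a' - b'‖ := by grw [norm_sub_le, norm_mul]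
      _ ≤ ‖a * a' - b * b'‖ + ‖a' - b'‖ := by grw [hc, one_mul]
  rcases le_total ‖a'‖ ‖b'‖ with h | h
  · rw [max_eq_right h]
    exact bound a b' ha (by noncomm_ring)
  · rw [max_eq_left h]
    exact bound b a' hb (by noncomm_ring)

def SmallNearCircle (f : ℂ → ℝ) : Prop :=
  ∀ ε > 0, ∃ r < (1:ℝ), ∀ z ∈ ball (0:ℂ) 1, r < ‖z‖ → f z < ε

namespace SmallNearCircle

variable {f g : ℂ → ℝ}

theorem add (hf : SmallNearCircle f) (hg : SmallNearCircle g) : SmallNearCircle (f + g) := by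
  intro ε hε
  obtain ⟨r, hr, hfr⟩ := hf (ε / 2) (half_pos hε)
  obtain ⟨s, hs, hgs⟩ := hg (ε / 2) (half_pos hε)
  refine ⟨max r s, max_lt hr hs, fun z hz hrz => ?_⟩
  have := add_lt_add (hfr z hz (lt_of_le_of_lt (le_max_left r s) hrz))
    (hgs z hz (lt_of_le_of_lt (le_max_right r s) hrz))
  simpa using this

theorem mono (hg : SmallNearCircle g) (hfg : ∀ z ∈ ball (0:ℂ) 1, f z ≤ g z) :
    SmallNearCircle f := by
  intro ε hε
  obtain ⟨r, hr, hgr⟩ := hg ε hε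
  exact ⟨r, hr, fun z hz hrz => (hfg z hz).trans_lt (hgr z hz hrz)⟩

end SmallNearCircle

theorem stmt_8_general (φ ψ : ℂ → ℂ) (ν : ℂ → ℝ)
    (hφm : ∀ z ∈ ball (0:ℂ) 1, φ z ∈ ball (0:ℂ) 1)
    (hψm : ∀ z ∈ ball (0:ℂ) 1, ψ z ∈ ball (0:ℂ) 1)
    (hνpos : ∀ z ∈ ball (0:ℂ) 1, 0 < ν z)
    (h1 : ∀ ε > 0, ∃ r < (1:ℝ), ∀ z ∈ ball (0:ℂ) 1, r < ‖z‖ →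
      ν z * ‖deriv φ z - deriv ψ z‖ < ε)
    (h2 : ∀ ε > 0, ∃ r < (1:ℝ), ∀ z ∈ ball (0:ℂ) 1, r < ‖z‖ →
      ν z * ‖φ z * deriv φ z - ψ z * deriv ψ z‖ < ε) :
    ∀ ε > 0, ∃ r < (1:ℝ), ∀ z ∈ ball (0:ℂ) 1, r < ‖z‖ →
      ν z * ‖φ z - ψ z‖ * max ‖deriv φ z‖ ‖deriv ψ z‖ < ε := by
  have hsum : SmallNearCircle (fun z => ν z * ‖φ z * deriv φ z - ψ z * deriv ψ z‖ +
      ν z * ‖deriv φ z - deriv ψ z‖) := SmallNearCircle.add h2 h1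
  refine hsum.mono fun z hz => ?_
  have hφz : ‖φ z‖ ≤ 1 := (mem_ball_zero_iff.mp (hφm z hz)).le
  have hψz : ‖ψ z‖ ≤ 1 := (mem_ball_zero_iff.mp (hψm z hz)).le
  rw [mul_assoc, ← mul_add]
  exact mul_le_mul_of_nonneg_left (norm_sub_mul_max_le hφz hψz) (hνpos z hz).le

/-- If `ν|φ'-ψ'| → 0` and `ν|φφ'-ψψ'| → 0` as `|z| → 1⁻`, then
`ν|φ-ψ|·max{|φ'|,|ψ'|} → 0` as `|z| → 1⁻`. -/
theorem stmt_8 (φ ψ : ℂ → ℂ) (ν : ℂ → ℝ)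
    (hφ : DifferentiableOn ℂ φ (ball (0:ℂ) 1))
    (hψ : DifferentiableOn ℂ ψ (ball (0:ℂ) 1))
    (hφm : ∀ z ∈ ball (0:ℂ) 1, φ z ∈ ball (0:ℂ) 1)
    (hψm : ∀ z ∈ ball (0:ℂ) 1, ψ z ∈ ball (0:ℂ) 1)
    (hνpos : ∀ z ∈ ball (0:ℂ) 1, 0 < ν z)
    (hνcont : ContinuousOn ν (ball (0:ℂ) 1))
    (hνrad : ∀ z w : ℂ, z ∈ ball (0:ℂ) 1 → w ∈ ball (0:ℂ) 1 → ‖z‖ = ‖w‖ → ν z = ν w)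
    (h1 : ∀ ε > 0, ∃ r < (1:ℝ), ∀ z ∈ ball (0:ℂ) 1, r < ‖z‖ →
      ν z * ‖deriv φ z - deriv ψ z‖ < ε)
    (h2 : ∀ ε > 0, ∃ r < (1:ℝ), ∀ z ∈ ball (0:ℂ) 1, r < ‖z‖ →
      ν z * ‖φ z * deriv φ z - ψ z * deriv ψ z‖ < ε) :
    ∀ ε > 0, ∃ r < (1:ℝ), ∀ z ∈ ball (0:ℂ) 1, r < ‖z‖ →
      ν z * ‖φ z - ψ z‖ * max ‖deriv φ z‖ ‖deriv ψ z‖ < ε :=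
  stmt_8_general φ ψ ν hφm hψm hνpos h1 h2
end

section
/- Let ν be a positive continuous radial weight on D and L a closed subset of the little Bloch type space 𝓑_{ν,0}. Then L is compact (in the norm topology of 𝓑_ν) if and only if L is bounded in 𝓑_ν and lim_{|z|→1⁻} sup_{f∈L} ν(z)|f'(z)| = 0. -/
set_option autoImplicit false

open Metric

/-- The Bloch-type distance `‖f(0)-g(0)‖ + sup_{z∈D} ν(z)|f'(z)-g'(z)|`. -/
noncomputable def blochDist (ν : ℂ → ℝ) (f g : ℂ → ℂ) : ℝ :=
  ‖f 0 - g 0‖ + sSup ((fun z => ν z * ‖deriv f z - deriv g z‖) '' ball (0:ℂ) 1)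

/-- Membership in the little Bloch type space `𝓑_{ν,0}`. -/
def memLittleBloch (ν : ℂ → ℝ) (f : ℂ → ℂ) : Prop :=
  DifferentiableOn ℂ f (ball (0:ℂ) 1) ∧
    (∃ M : ℝ, ∀ z ∈ ball (0:ℂ) 1, ν z * ‖deriv f z‖ ≤ M) ∧
    ∀ ε > 0, ∃ r < (1:ℝ), ∀ z ∈ ball (0:ℂ) 1, r < ‖z‖ → ν z * ‖deriv f z‖ < ε

/-!
Sequential compactness forces both conditions: a sequence in `L` that is unbounded, or whose
weighted derivatives stay `≥ ε` at points tending to the boundary, has no subsequence converging in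
`𝓑_ν` to some `g ∈ L`, since `‖f‖ ≤ ‖g‖ + d(f, g)` and `ν |g'|` is small near the boundary.

Conversely, a bounded `L` has derivatives uniformly bounded on compact subdiscs, where `ν` has a
positive minimum. By the mean value theorem and Arzelà–Ascoli, every sequence in `L` then has a
locally uniformly convergent subsequence, whose derivatives converge locally uniformly by
Weierstrass. Uniform vanishing near the boundary upgrades this to uniform convergence of `ν · f'`
on the whole disc, i.e. convergence in `𝓑_ν`; the limit lies in `𝓑_{ν,0}`, hence in the closed
set `L`.
-/

open Set Filter Topology

section

variable {U : Set ℂ} {F : ℕ → ℂ → ℂ}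

theorem exists_strictMono_tendstoLocallyUniformlyOn_of_equicontinuousOn
    (hU : IsOpen U) (hcont : ∀ n, ContinuousOn (F n) U)
    (heq : EquicontinuousOn F U) (hbdd : ∀ x ∈ U, ∃ R, ∀ n, ‖F n x‖ ≤ R) :
    ∃ (g : ℂ → ℂ) (k : ℕ → ℕ), StrictMono k ∧
      TendstoLocallyUniformlyOn (fun n => F (k n)) g atTop U := by
  have : LocallyCompactSpace U := hU.isLocallyClosed.locallyCompactSpace
  have : T2Space (UniformOnFun U ℂ {K | IsCompact K}) :=
    UniformOnFun.t2Space_of_covering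
      (eq_univ_iff_forall.mpr fun x => ⟨{x}, isCompact_singleton, rfl⟩)
  let G : ℕ → C(U, ℂ) := fun n => ⟨U.domRestrict (F n), (hcont n).domRestrict⟩
  have hGeq : Equicontinuous ((↑) : range G → U → ℂ) := fun x => by
    simpa only [EquicontinuousAt, forall_subtype_range_iff, G, ContinuousMap.coe_mk,
      Function.comp_apply] using
      (equicontinuous_restrict_iff F).mpr heq x
  have hcl : IsCompact (closure (range G)) := by
    refine ArzelaAscoli.isCompact_closure_of_isClosedEmbedding
      (𝔖 := {K : Set U | IsCompact K}) (fun K hK => hK)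
      ContinuousMap.isUniformEmbedding_toUniformOnFunIsCompact.isClosedEmbedding
      (fun K _ => hGeq.equicontinuousOn _) (fun K _ x _ => ?_)
    obtain ⟨R, hR⟩ := hbdd x x.2
    exact ⟨closedBall 0 R, isCompact_closedBall _ _, by
      rintro _ ⟨n, rfl⟩; simpa [G] using hR n⟩
  obtain ⟨G₀, -, k, hk, hGk⟩ :=
    hcl.isSeqCompact fun n => subset_closure (mem_range_self n)
  refine ⟨Function.extend (↑) G₀ 0, k, hk, ?_⟩
  rw [tendstoLocallyUniformlyOn_iff_tendstoLocallyUniformly_comp_coe,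
    Function.extend_comp Subtype.val_injective]
  exact ContinuousMap.tendsto_iff_tendstoLocallyUniformly.mp hGk

theorem equicontinuousOn_of_forall_isCompact_norm_deriv_le (hU : IsOpen U)
    (hF : ∀ n, DifferentiableOn ℂ (F n) U)
    (hderiv : ∀ K ⊆ U, IsCompact K → ∃ C, ∀ n, ∀ z ∈ K, ‖deriv (F n) z‖ ≤ C) :
    EquicontinuousOn F U := by
  intro x hx
  obtain ⟨δ, hδ, hxδ⟩ := nhds_basis_closedBall.mem_iff.mp (hU.mem_nhds hx)
  obtain ⟨C, hC⟩ := hderiv _ hxδ (isCompact_closedBall x δ)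
  refine (equicontinuousAt_of_continuity_modulus (fun y => C * ‖y - x‖) ?_ F ?_)
    |>.equicontinuousWithinAt U
  · simpa using ((continuous_id.sub (continuous_const (y := x))).norm.const_mul C).tendsto x
  · filter_upwards [ball_mem_nhds x hδ] with y hy n
    rw [dist_comm, dist_eq_norm]
    exact (convex_ball x δ).norm_image_sub_le_of_norm_deriv_le
      (fun z hz => (hF n).differentiableAt (hU.mem_nhds (hxδ (ball_subset_closedBall hz))))
      (fun z hz => hC n z (ball_subset_closedBall hz)) (mem_ball_self hδ) hy

theorem exists_norm_le_of_forall_isCompact_norm_deriv_le (hU : IsOpen U) (hUc : Convex ℝ U)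
    (hF : ∀ n, DifferentiableOn ℂ (F n) U)
    (hderiv : ∀ K ⊆ U, IsCompact K → ∃ C, ∀ n, ∀ z ∈ K, ‖deriv (F n) z‖ ≤ C)
    {x₀ : ℂ} (hx₀ : x₀ ∈ U) {B : ℝ} (hB : ∀ n, ‖F n x₀‖ ≤ B) :
    ∀ x ∈ U, ∃ R, ∀ n, ‖F n x‖ ≤ R := by
  intro x hx
  have hseg : segment ℝ x₀ x ⊆ U := hUc.segment_subset hx₀ hx
  have hcpt : IsCompact (segment ℝ x₀ x) :=
    convexHull_pair (𝕜 := ℝ) x₀ x ▸ (toFinite ({x₀, x} : Set ℂ)).isCompact_convexHull ℝ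
  obtain ⟨C, hC⟩ := hderiv _ hseg hcpt
  refine ⟨B + C * ‖x - x₀‖, fun n => ?_⟩
  have hmvt := (convex_segment x₀ x).norm_image_sub_le_of_norm_deriv_le
    (fun z hz => (hF n).differentiableAt (hU.mem_nhds (hseg hz))) (hC n)
    (left_mem_segment ℝ x₀ x) (right_mem_segment ℝ x₀ x)
  calc ‖F n x‖ ≤ ‖F n x₀‖ + ‖F n x - F n x₀‖ := norm_le_insert' _ _
    _ ≤ B + C * ‖x - x₀‖ := add_le_add (hB n) hmvt

theorem exists_strictMono_tendstoLocallyUniformlyOn_of_norm_deriv_le (hU : IsOpen U)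
    (hUc : Convex ℝ U) (hF : ∀ n, DifferentiableOn ℂ (F n) U)
    (hderiv : ∀ K ⊆ U, IsCompact K → ∃ C, ∀ n, ∀ z ∈ K, ‖deriv (F n) z‖ ≤ C)
    {x₀ : ℂ} (hx₀ : x₀ ∈ U) {B : ℝ} (hB : ∀ n, ‖F n x₀‖ ≤ B) :
    ∃ (g : ℂ → ℂ) (k : ℕ → ℕ), StrictMono k ∧
      TendstoLocallyUniformlyOn (fun n => F (k n)) g atTop U :=
  exists_strictMono_tendstoLocallyUniformlyOn_of_equicontinuousOn hU
    (fun n => (hF n).continuousOn) (equicontinuousOn_of_forall_isCompact_norm_deriv_le hU hF hderiv)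
    (exists_norm_le_of_forall_isCompact_norm_deriv_le hU hUc hF hderiv hx₀ hB)

end

noncomputable def blochNorm (ν : ℂ → ℝ) (f : ℂ → ℂ) : ℝ :=
  ‖f 0‖ + sSup ((fun z => ν z * ‖deriv f z‖) '' ball (0:ℂ) 1)

def IsBlochSeqCompact (ν : ℂ → ℝ) (L : Set (ℂ → ℂ)) : Prop :=
  ∀ F : ℕ → ℂ → ℂ, (∀ n, F n ∈ L) →
    ∃ g ∈ L, ∃ k : ℕ → ℕ, StrictMono k ∧ Tendsto (fun n => blochDist ν (F (k n)) g) atTop (𝓝 0)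

def VanishesUniformly (ν : ℂ → ℝ) (L : Set (ℂ → ℂ)) : Prop :=
  ∀ ε > 0, ∃ r < (1:ℝ), ∀ z ∈ ball (0:ℂ) 1, r < ‖z‖ → ∀ f ∈ L, ν z * ‖deriv f z‖ < ε

def TendstoWeightedUniformly (ν : ℂ → ℝ) (φ : ℕ → ℂ → ℂ) (ψ : ℂ → ℂ) : Prop :=
  ∀ ε > 0, ∀ᶠ n in atTop, ∀ z ∈ ball (0:ℂ) 1, ν z * ‖φ n z - ψ z‖ ≤ ε

section

variable {ν : ℂ → ℝ} {f g : ℂ → ℂ}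

theorem mul_norm_le_mul_norm_sub_add {a : ℝ} (ha : 0 ≤ a) (x y : ℂ) :
    a * ‖x‖ ≤ a * ‖x - y‖ + a * ‖y‖ := by
  rw [← mul_add]; exact mul_le_mul_of_nonneg_left (norm_le_norm_sub_add x y) ha

theorem bddAbove_mul_norm_deriv (hf : memLittleBloch ν f) :
    BddAbove ((fun z => ν z * ‖deriv f z‖) '' ball (0:ℂ) 1) :=
  hf.2.1.imp fun _ hM => forall_mem_image.mpr hM

theorem bddAbove_mul_norm_deriv_sub (hν : ∀ z ∈ ball (0:ℂ) 1, 0 ≤ ν z)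
    (hf : memLittleBloch ν f) (hg : memLittleBloch ν g) :
    BddAbove ((fun z => ν z * ‖deriv f z - deriv g z‖) '' ball (0:ℂ) 1) := by
  obtain ⟨Mf, hMf⟩ := hf.2.1
  obtain ⟨Mg, hMg⟩ := hg.2.1
  refine ⟨Mf + Mg, forall_mem_image.mpr fun z hz => ?_⟩
  calc ν z * ‖deriv f z - deriv g z‖ ≤ ν z * ‖deriv f z‖ + ν z * ‖deriv g z‖ := by
        rw [← mul_add]; exact mul_le_mul_of_nonneg_left (norm_sub_le _ _) (hν z hz)
    _ ≤ Mf + Mg := add_le_add (hMf z hz) (hMg z hz)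

theorem blochDist_nonneg (hν : ∀ z ∈ ball (0:ℂ) 1, 0 ≤ ν z) : 0 ≤ blochDist ν f g :=
  add_nonneg (norm_nonneg _) <| Real.sSup_nonneg <| forall_mem_image.mpr fun z hz =>
    mul_nonneg (hν z hz) (norm_nonneg _)

theorem blochDist_le {b : ℝ} (hb : 0 ≤ b)
    (h : ∀ z ∈ ball (0:ℂ) 1, ν z * ‖deriv f z - deriv g z‖ ≤ b) :
    blochDist ν f g ≤ ‖f 0 - g 0‖ + b :=
  add_le_add le_rfl (Real.sSup_le (forall_mem_image.mpr h) hb)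

theorem mul_norm_deriv_le_blochDist_add (hν : ∀ z ∈ ball (0:ℂ) 1, 0 ≤ ν z)
    (hfg : BddAbove ((fun z => ν z * ‖deriv f z - deriv g z‖) '' ball (0:ℂ) 1))
    {z : ℂ} (hz : z ∈ ball (0:ℂ) 1) :
    ν z * ‖deriv f z‖ ≤ blochDist ν f g + ν z * ‖deriv g z‖ := by
  have hdist : ν z * ‖deriv f z - deriv g z‖ ≤ blochDist ν f g :=
    (le_csSup hfg (mem_image_of_mem _ hz)).trans (le_add_of_nonneg_left (norm_nonneg _))
  calc ν z * ‖deriv f z‖ ≤ ν z * ‖deriv f z - deriv g z‖ + ν z * ‖deriv g z‖ :=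
        mul_norm_le_mul_norm_sub_add (hν z hz) _ _
    _ ≤ blochDist ν f g + ν z * ‖deriv g z‖ := by gcongr

theorem blochNorm_le_add_blochDist (hν : ∀ z ∈ ball (0:ℂ) 1, 0 ≤ ν z)
    (hg : BddAbove ((fun z => ν z * ‖deriv g z‖) '' ball (0:ℂ) 1))
    (hfg : BddAbove ((fun z => ν z * ‖deriv f z - deriv g z‖) '' ball (0:ℂ) 1)) :
    blochNorm ν f ≤ blochNorm ν g + blochDist ν f g := by
  have hS : sSup ((fun z => ν z * ‖deriv f z‖) '' ball (0:ℂ) 1) ≤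
      sSup ((fun z => ν z * ‖deriv f z - deriv g z‖) '' ball (0:ℂ) 1) +
        sSup ((fun z => ν z * ‖deriv g z‖) '' ball (0:ℂ) 1) := by
    refine csSup_le ((nonempty_ball.mpr one_pos).image _) (forall_mem_image.mpr fun z hz => ?_)
    exact (mul_norm_le_mul_norm_sub_add (hν z hz) _ _).trans <|
      add_le_add (le_csSup hfg (mem_image_of_mem _ hz)) (le_csSup hg (mem_image_of_mem _ hz))
  have h0 : ‖f 0‖ ≤ ‖g 0‖ + ‖f 0 - g 0‖ := norm_le_insert' _ _
  unfold blochNorm blochDist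
  linarith

theorem norm_le_blochNorm (hν : ∀ z ∈ ball (0:ℂ) 1, 0 ≤ ν z) : ‖f 0‖ ≤ blochNorm ν f :=
  le_add_of_nonneg_right <| Real.sSup_nonneg <| forall_mem_image.mpr fun z hz =>
    mul_nonneg (hν z hz) (norm_nonneg _)

theorem mul_norm_deriv_le_blochNorm (hf : memLittleBloch ν f) {z : ℂ} (hz : z ∈ ball (0:ℂ) 1) :
    ν z * ‖deriv f z‖ ≤ blochNorm ν f :=
  (le_csSup (bddAbove_mul_norm_deriv hf) (mem_image_of_mem _ hz)).trans
    (le_add_of_nonneg_left (norm_nonneg _))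

end

section

variable {ν : ℂ → ℝ} {L : Set (ℂ → ℂ)}

theorem IsBlochSeqCompact.exists_blochNorm_le (hν : ∀ z ∈ ball (0:ℂ) 1, 0 ≤ ν z)
    (hL : ∀ f ∈ L, memLittleBloch ν f) (hc : IsBlochSeqCompact ν L) :
    ∃ M, ∀ f ∈ L, blochNorm ν f ≤ M := by
  by_contra! h
  choose f hfL hf using fun n : ℕ => h n
  obtain ⟨g, hgL, k, hk, hfg⟩ := hc f hfL
  have hk' : Tendsto (fun n => (k n : ℝ)) atTop atTop :=
    tendsto_natCast_atTop_atTop.comp hk.tendsto_atTop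
  obtain ⟨n, hn1, hn2⟩ := ((hfg.eventually_lt_const one_pos).and
    (hk'.eventually_gt_atTop (blochNorm ν g + 1))).exists
  have := blochNorm_le_add_blochDist hν (bddAbove_mul_norm_deriv (hL g hgL))
    (bddAbove_mul_norm_deriv_sub hν (hL _ (hfL (k n))) (hL g hgL))
  linarith [hf (k n)]

theorem IsBlochSeqCompact.vanishesUniformly (hν : ∀ z ∈ ball (0:ℂ) 1, 0 ≤ ν z)
    (hL : ∀ f ∈ L, memLittleBloch ν f) (hc : IsBlochSeqCompact ν L) :
    VanishesUniformly ν L := by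
  intro ε hε
  by_contra! h
  choose z hz hzr f hfL hf using fun n : ℕ =>
    h (1 - 1 / (n + 1)) (sub_lt_self 1 Nat.one_div_pos_of_nat)
  obtain ⟨g, hgL, k, hk, hfg⟩ := hc f hfL
  obtain ⟨r, hr1, hgr⟩ := (hL g hgL).2.2 (ε / 2) (half_pos hε)
  have hr : ∀ᶠ n in atTop, r < 1 - 1 / ((k n : ℝ) + 1) := by
    have : Tendsto (fun m : ℕ => 1 - 1 / ((m : ℝ) + 1)) atTop (𝓝 1) := by
      simpa using tendsto_one_div_add_atTop_nhds_zero_nat.const_sub (1 : ℝ)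
    exact (this.comp hk.tendsto_atTop).eventually (eventually_gt_nhds hr1)
  obtain ⟨n, hn1, hn2⟩ := ((hfg.eventually_lt_const (half_pos hε)).and hr).exists
  have := mul_norm_deriv_le_blochDist_add hν
    (bddAbove_mul_norm_deriv_sub hν (hL _ (hfL (k n))) (hL g hgL)) (hz (k n))
  linarith [hf (k n), hgr _ (hz (k n)) (hn2.trans (hzr (k n)))]

end

section

variable {ν : ℂ → ℝ}

theorem exists_forall_norm_le_of_mul_norm_le {U : Set ℂ} (hνpos : ∀ z ∈ U, 0 < ν z)
    (hνcont : ContinuousOn ν U) {φ : ℕ → ℂ → ℂ} {M : ℝ}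
    (hM : ∀ n, ∀ z ∈ U, ν z * ‖φ n z‖ ≤ M) :
    ∀ K ⊆ U, IsCompact K → ∃ C, ∀ n, ∀ z ∈ K, ‖φ n z‖ ≤ C := by
  intro K hKU hK
  obtain ⟨C, hC⟩ := hK.exists_bound_of_continuousOn
    ((hνcont.mono hKU).inv₀ fun z hz => (hνpos z (hKU hz)).ne')
  refine ⟨C * M, fun n z hz => ?_⟩
  have hνz := hνpos z (hKU hz)
  have hCz : (ν z)⁻¹ ≤ C := (le_abs_self _).trans (hC z hz)
  calc ‖φ n z‖ = (ν z)⁻¹ * (ν z * ‖φ n z‖) := by field_simp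
    _ ≤ C * M := mul_le_mul hCz (hM n z (hKU hz))
      (mul_nonneg hνz.le (norm_nonneg _)) ((inv_pos.mpr hνz).le.trans hCz)

theorem TendstoLocallyUniformlyOn.tendstoWeightedUniformly {φ : ℕ → ℂ → ℂ} {ψ : ℂ → ℂ}
    (h : TendstoLocallyUniformlyOn φ ψ atTop (ball (0:ℂ) 1))
    (hν : ∀ z ∈ ball (0:ℂ) 1, 0 ≤ ν z) (hνcont : ContinuousOn ν (ball (0:ℂ) 1))
    (hvan : ∀ ε > 0, ∃ r < (1:ℝ), ∀ z ∈ ball (0:ℂ) 1, r < ‖z‖ → ∀ n, ν z * ‖φ n z‖ < ε) :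
    TendstoWeightedUniformly ν φ ψ := by
  intro ε hε
  obtain ⟨r, hr1, hr⟩ := hvan (ε / 2) (half_pos hε)
  have hKU : closedBall (0:ℂ) r ⊆ ball 0 1 := closedBall_subset_ball hr1
  obtain ⟨C, hC⟩ := (isCompact_closedBall (0:ℂ) r).exists_bound_of_continuousOn (hνcont.mono hKU)
  have hunif := (tendstoLocallyUniformlyOn_iff_forall_isCompact isOpen_ball).mp h _ hKU
    (isCompact_closedBall 0 r)
  have hψ : ∀ z ∈ ball (0:ℂ) 1, r < ‖z‖ → ν z * ‖ψ z‖ ≤ ε / 2 := fun z hz hrz =>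
    le_of_tendsto ((h.tendsto_at hz).norm.const_mul _)
      (Eventually.of_forall fun n => (hr z hz hrz n).le)
  filter_upwards [Metric.tendstoUniformlyOn_iff.mp hunif (ε / (|C| + 1)) (by positivity)]
    with n hn z hz
  rcases le_or_gt ‖z‖ r with hzr | hrz
  · have hzK : z ∈ closedBall (0:ℂ) r := mem_closedBall_zero_iff.mpr hzr
    have h1 : ν z ≤ |C| := (le_abs_self _).trans ((hC z hzK).trans (le_abs_self C))
    have h2 : ‖φ n z - ψ z‖ ≤ ε / (|C| + 1) := by
      rw [← dist_eq_norm, dist_comm]; exact (hn z hzK).le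
    calc ν z * ‖φ n z - ψ z‖ ≤ |C| * (ε / (|C| + 1)) :=
          mul_le_mul h1 h2 (norm_nonneg _) (abs_nonneg _)
      _ ≤ ε := by
          rw [mul_div_assoc', div_le_iff₀ (by positivity)]; nlinarith [abs_nonneg C]
  · calc ν z * ‖φ n z - ψ z‖ ≤ ν z * ‖φ n z‖ + ν z * ‖ψ z‖ := by
          rw [← mul_add]; exact mul_le_mul_of_nonneg_left (norm_sub_le _ _) (hν z hz)
      _ ≤ ε := by linarith [(hr z hz hrz n).le, hψ z hz hrz]

variable {F : ℕ → ℂ → ℂ} {g : ℂ → ℂ}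

theorem TendstoWeightedUniformly.tendsto_blochDist
    (h : TendstoWeightedUniformly ν (fun n => deriv (F n)) (deriv g))
    (hν : ∀ z ∈ ball (0:ℂ) 1, 0 ≤ ν z) (h0 : Tendsto (fun n => F n 0) atTop (𝓝 (g 0))) :
    Tendsto (fun n => blochDist ν (F n) g) atTop (𝓝 0) := by
  have h0' : Tendsto (fun n => ‖F n 0 - g 0‖) atTop (𝓝 0) :=
    tendsto_iff_norm_sub_tendsto_zero.mp h0
  refine tendsto_order.mpr ⟨fun a ha => Eventually.of_forall fun n =>
    ha.trans_le (blochDist_nonneg hν), fun a ha => ?_⟩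
  filter_upwards [h0'.eventually_lt_const (half_pos ha), h (a / 2) (half_pos ha)] with n hn hd
  linarith [blochDist_le (half_pos ha).le hd]

theorem TendstoWeightedUniformly.memLittleBloch
    (h : TendstoWeightedUniformly ν (fun n => deriv (F n)) (deriv g))
    (hν : ∀ z ∈ ball (0:ℂ) 1, 0 ≤ ν z) (hF : ∀ n, memLittleBloch ν (F n))
    (hg : DifferentiableOn ℂ g (ball (0:ℂ) 1)) : memLittleBloch ν g := by
  have key : ∀ n, ∀ z ∈ ball (0:ℂ) 1,
      ν z * ‖deriv g z‖ ≤ ν z * ‖deriv (F n) z - deriv g z‖ + ν z * ‖deriv (F n) z‖ :=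
    fun n z hz => norm_sub_rev (deriv g z) (deriv (F n) z) ▸
      mul_norm_le_mul_norm_sub_add (hν z hz) _ _
  refine ⟨hg, ?_, fun ε hε => ?_⟩
  · obtain ⟨n, hn⟩ := (h 1 one_pos).exists
    obtain ⟨M, hM⟩ := (hF n).2.1
    exact ⟨1 + M, fun z hz => (key n z hz).trans (add_le_add (hn z hz) (hM z hz))⟩
  · obtain ⟨n, hn⟩ := (h (ε / 2) (half_pos hε)).exists
    obtain ⟨r, hr1, hr⟩ := (hF n).2.2 (ε / 2) (half_pos hε)
    exact ⟨r, hr1, fun z hz hrz => (key n z hz).trans_lt (by linarith [hn z hz, hr z hz hrz])⟩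

variable {L : Set (ℂ → ℂ)}

theorem isBlochSeqCompact_of_vanishesUniformly (hνpos : ∀ z ∈ ball (0:ℂ) 1, 0 < ν z)
    (hνcont : ContinuousOn ν (ball (0:ℂ) 1)) (hL : ∀ f ∈ L, memLittleBloch ν f)
    (hclosed : ∀ (F : ℕ → ℂ → ℂ) (g : ℂ → ℂ), (∀ n, F n ∈ L) → memLittleBloch ν g →
      Tendsto (fun n => blochDist ν (F n) g) atTop (𝓝 0) → g ∈ L)
    (hM : ∃ M, ∀ f ∈ L, blochNorm ν f ≤ M) (hvan : VanishesUniformly ν L) :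
    IsBlochSeqCompact ν L := by
  intro F hFL
  have hν : ∀ z ∈ ball (0:ℂ) 1, 0 ≤ ν z := fun z hz => (hνpos z hz).le
  obtain ⟨M, hM⟩ := hM
  have hderiv := exists_forall_norm_le_of_mul_norm_le hνpos hνcont
    fun n z hz => (mul_norm_deriv_le_blochNorm (hL _ (hFL n)) hz).trans (hM _ (hFL n))
  obtain ⟨g, k, hk, hFg⟩ := exists_strictMono_tendstoLocallyUniformlyOn_of_norm_deriv_le
    isOpen_ball (convex_ball 0 1) (fun n => (hL _ (hFL n)).1) hderiv (mem_ball_self one_pos)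
    fun n => (norm_le_blochNorm hν).trans (hM _ (hFL n))
  have hdiff := Eventually.of_forall (f := atTop) fun n => (hL _ (hFL (k n))).1
  have hw : TendstoWeightedUniformly ν (fun n => deriv (F (k n))) (deriv g) :=
    (hFg.deriv hdiff isOpen_ball).tendstoWeightedUniformly hν hνcont fun ε hε =>
      (hvan ε hε).imp fun r ⟨hr1, hr⟩ => ⟨hr1, fun z hz hrz n => hr z hz hrz _ (hFL _)⟩
  have hg := hw.memLittleBloch hν (fun n => hL _ (hFL _)) (hFg.differentiableOn hdiff isOpen_ball)
  have hdist := hw.tendsto_blochDist hν (hFg.tendsto_at (mem_ball_self one_pos))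
  exact ⟨g, hclosed _ g (fun n => hFL _) hg hdist, k, hk, hdist⟩

end

theorem stmt_12_general (ν : ℂ → ℝ) (L : Set (ℂ → ℂ))
    (hνpos : ∀ z ∈ ball (0:ℂ) 1, 0 < ν z)
    (hνcont : ContinuousOn ν (ball (0:ℂ) 1))
    (hL : ∀ f ∈ L, memLittleBloch ν f)
    (hclosed : ∀ (F : ℕ → ℂ → ℂ) (g : ℂ → ℂ), (∀ n, F n ∈ L) → memLittleBloch ν g →
      Filter.Tendsto (fun n => blochDist ν (F n) g) Filter.atTop (nhds 0) → g ∈ L) :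
    (∀ F : ℕ → ℂ → ℂ, (∀ n, F n ∈ L) →
        ∃ g ∈ L, ∃ k : ℕ → ℕ, StrictMono k ∧
          Filter.Tendsto (fun n => blochDist ν (F (k n)) g) Filter.atTop (nhds 0)) ↔
      ((∃ M : ℝ, ∀ f ∈ L, ‖f 0‖ + sSup ((fun z => ν z * ‖deriv f z‖) '' ball (0:ℂ) 1) ≤ M) ∧
        ∀ ε > 0, ∃ r < (1:ℝ), ∀ z ∈ ball (0:ℂ) 1, r < ‖z‖ →
          ∀ f ∈ L, ν z * ‖deriv f z‖ < ε) := by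
  have hν : ∀ z ∈ ball (0:ℂ) 1, 0 ≤ ν z := fun z hz => (hνpos z hz).le
  exact ⟨fun hc => ⟨IsBlochSeqCompact.exists_blochNorm_le hν hL hc,
      IsBlochSeqCompact.vanishesUniformly hν hL hc⟩,
    fun ⟨hM, hvan⟩ => isBlochSeqCompact_of_vanishesUniformly hνpos hνcont hL hclosed hM hvan⟩

/-- A closed subset `L ⊆ 𝓑_{ν,0}` is compact (sequentially, for the Bloch norm) iff it is
norm-bounded and `lim_{|z|→1⁻} sup_{f∈L} ν(z)|f'(z)| = 0`. -/
theorem stmt_12 (ν : ℂ → ℝ) (L : Set (ℂ → ℂ))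
    (hνpos : ∀ z ∈ ball (0:ℂ) 1, 0 < ν z)
    (hνcont : ContinuousOn ν (ball (0:ℂ) 1))
    (hνrad : ∀ z w : ℂ, z ∈ ball (0:ℂ) 1 → w ∈ ball (0:ℂ) 1 → ‖z‖ = ‖w‖ → ν z = ν w)
    (hL : ∀ f ∈ L, memLittleBloch ν f)
    (hclosed : ∀ (F : ℕ → ℂ → ℂ) (g : ℂ → ℂ), (∀ n, F n ∈ L) → memLittleBloch ν g →
      Filter.Tendsto (fun n => blochDist ν (F n) g) Filter.atTop (nhds 0) → g ∈ L) :
    (∀ F : ℕ → ℂ → ℂ, (∀ n, F n ∈ L) →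
        ∃ g ∈ L, ∃ k : ℕ → ℕ, StrictMono k ∧
          Filter.Tendsto (fun n => blochDist ν (F (k n)) g) Filter.atTop (nhds 0)) ↔
      ((∃ M : ℝ, ∀ f ∈ L, ‖f 0‖ + sSup ((fun z => ν z * ‖deriv f z‖) '' ball (0:ℂ) 1) ≤ M) ∧
        ∀ ε > 0, ∃ r < (1:ℝ), ∀ z ∈ ball (0:ℂ) 1, r < ‖z‖ →
          ∀ f ∈ L, ν z * ‖deriv f z‖ < ε) :=
  stmt_12_general ν L hνpos hνcont hL hclosed
end

section
/- Let φ, ψ : D → D be analytic, z₀ ∈ D, and g(z) = ((φ(z₀)-z)/(1-conj(φ(z₀))z))². Then |d/dz[(g∘φ) - (g∘ψ)](z₀)| = 2·(|ψ'(z₀)|/(1-|ψ(z₀)|²))·ρ(φ(z₀),ψ(z₀))·(1 - ρ(φ(z₀),ψ(z₀))²), where ρ is the pseudo-hyperbolic distance. -/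
set_option autoImplicit false

open Metric Complex

/-
With `a = φ z₀`, the automorphism `α_a` vanishes at `φ z₀`, so `(α_a ∘ φ)²` has a double zero at
`z₀` and the derivative reduces to `-2 α_a(ψ z₀) α_a'(ψ z₀) ψ'(z₀)`. For an automorphism the
Schwarz–Pick inequality is an equality, `|α_a'(b)| = (1 - ρ(a,b)²) / (1 - |b|²)`, which comes
from `|1 - ā b|² - |a - b|² = (1 - |a|²)(1 - |b|²)`.
-/

open ComplexConjugate

namespace Complex

/-- The paper's `α_a`. -/
noncomputable def mobius (a w : ℂ) : ℂ := (a - w) / (1 - conj a * w)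

@[simp]
lemma mobius_self (a : ℂ) : mobius a a = 0 := by
  simp [mobius]

lemma one_sub_conj_mul_ne_zero {a b : ℂ} (ha : ‖a‖ ≤ 1) (hb : ‖b‖ < 1) :
    1 - conj a * b ≠ 0 := by
  refine sub_ne_zero.mpr fun h => ?_
  have : ‖conj a * b‖ < 1 := by
    rw [norm_mul, norm_conj]
    exact lt_of_le_of_lt (mul_le_of_le_one_left (norm_nonneg b) ha) hb
  simp [← h] at this

lemma hasDerivAt_mobius {a b : ℂ} (h : 1 - conj a * b ≠ 0) :
    HasDerivAt (mobius a) ((conj a * a - 1) / (1 - conj a * b) ^ 2) b := by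
  have hnum : HasDerivAt (fun w : ℂ => a - w) (-1) b := (hasDerivAt_id b).const_sub a
  have hden : HasDerivAt (fun w : ℂ => 1 - conj a * w) (-conj a) b := by
    simpa using ((hasDerivAt_id b).const_mul (conj a)).const_sub 1
  exact (hnum.fun_div hden h).congr_deriv (by ring)

lemma norm_one_sub_conj_mul_sq_sub_norm_sub_sq (a b : ℂ) :
    ‖1 - conj a * b‖ ^ 2 - ‖a - b‖ ^ 2 = (1 - ‖a‖ ^ 2) * (1 - ‖b‖ ^ 2) := by
  simp only [← normSq_eq_norm_sq, normSq_apply, mul_re, mul_im, conj_re, conj_im, sub_re,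
    sub_im, one_re, one_im]
  ring

lemma one_sub_norm_mobius_sq {a b : ℂ} (h : 1 - conj a * b ≠ 0) :
    1 - ‖mobius a b‖ ^ 2 = (1 - ‖a‖ ^ 2) * (1 - ‖b‖ ^ 2) / ‖1 - conj a * b‖ ^ 2 := by
  have hd : ‖1 - conj a * b‖ ≠ 0 := norm_ne_zero_iff.mpr h
  rw [← norm_one_sub_conj_mul_sq_sub_norm_sub_sq, mobius, norm_div, div_pow,
    one_sub_div (pow_ne_zero 2 hd)]

lemma norm_conj_mul_self_sub_one {a : ℂ} (ha : ‖a‖ ≤ 1) : ‖conj a * a - 1‖ = 1 - ‖a‖ ^ 2 := by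
  rw [← normSq_eq_conj_mul_self, normSq_eq_norm_sq, ← norm_neg, neg_sub]
  norm_cast
  rw [Real.norm_eq_abs, abs_of_nonneg (by nlinarith [norm_nonneg a])]

lemma norm_deriv_mobius {a b : ℂ} (ha : ‖a‖ < 1) (hb : ‖b‖ < 1) :
    ‖(conj a * a - 1) / (1 - conj a * b) ^ 2‖ = (1 - ‖mobius a b‖ ^ 2) / (1 - ‖b‖ ^ 2) := by
  have h := one_sub_conj_mul_ne_zero ha.le hb
  have hb' : 1 - ‖b‖ ^ 2 ≠ 0 := by nlinarith [norm_nonneg b]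
  rw [one_sub_norm_mobius_sq h, norm_div, norm_pow, norm_conj_mul_self_sub_one ha.le]
  field_simp

end Complex

/-- Test function computation for `g = α_{φ(z₀)}²`: the derivative of `g∘φ - g∘ψ` at `z₀`
has modulus `2·(|ψ'(z₀)|/(1-|ψ(z₀)|²))·ρ(φ(z₀),ψ(z₀))·(1-ρ(φ(z₀),ψ(z₀))²)`. -/
theorem stmt_14 (φ ψ : ℂ → ℂ) (z₀ : ℂ)
    (hφ : DifferentiableOn ℂ φ (ball (0:ℂ) 1))
    (hψ : DifferentiableOn ℂ ψ (ball (0:ℂ) 1))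
    (hφm : ∀ z ∈ ball (0:ℂ) 1, φ z ∈ ball (0:ℂ) 1)
    (hψm : ∀ z ∈ ball (0:ℂ) 1, ψ z ∈ ball (0:ℂ) 1)
    (hz₀ : z₀ ∈ ball (0:ℂ) 1) :
    ‖deriv (fun z =>
        ((φ z₀ - φ z) / (1 - (starRingEnd ℂ) (φ z₀) * φ z)) ^ 2 -
          ((φ z₀ - ψ z) / (1 - (starRingEnd ℂ) (φ z₀) * ψ z)) ^ 2) z₀‖ =
      2 * (‖deriv ψ z₀‖ / (1 - ‖ψ z₀‖ ^ 2)) *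
        ‖(φ z₀ - ψ z₀) / (1 - (starRingEnd ℂ) (φ z₀) * ψ z₀)‖ *
        (1 - ‖(φ z₀ - ψ z₀) / (1 - (starRingEnd ℂ) (φ z₀) * ψ z₀)‖ ^ 2) := by
  have ha : ‖φ z₀‖ < 1 := mem_ball_zero_iff.mp (hφm z₀ hz₀)
  have hb : ‖ψ z₀‖ < 1 := mem_ball_zero_iff.mp (hψm z₀ hz₀)
  have hφd := (hφ.differentiableAt (isOpen_ball.mem_nhds hz₀)).hasDerivAt
  have hψd := (hψ.differentiableAt (isOpen_ball.mem_nhds hz₀)).hasDerivAt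
  have hderiv : HasDerivAt (fun z => mobius (φ z₀) (φ z) ^ 2 - mobius (φ z₀) (ψ z) ^ 2) _ z₀ :=
    (((hasDerivAt_mobius (one_sub_conj_mul_ne_zero ha.le ha)).comp z₀ hφd).fun_pow 2).fun_sub
      (((hasDerivAt_mobius (one_sub_conj_mul_ne_zero ha.le hb)).comp z₀ hψd).fun_pow 2)
  change ‖deriv (fun z => mobius (φ z₀) (φ z) ^ 2 - mobius (φ z₀) (ψ z) ^ 2) z₀‖ =
    2 * (‖deriv ψ z₀‖ / (1 - ‖ψ z₀‖ ^ 2)) * ‖mobius (φ z₀) (ψ z₀)‖ *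
      (1 - ‖mobius (φ z₀) (ψ z₀)‖ ^ 2)
  rw [hderiv.deriv]
  simp only [Function.comp_apply, mobius_self, Nat.add_one_sub_one, pow_one, mul_zero, zero_mul,
    zero_sub, norm_neg, norm_mul, Nat.cast_ofNat, norm_ofNat, norm_deriv_mobius ha hb]
  ring
end

section
/- Let ν be a positive weight on D and φ, ψ analytic self-maps of D. Then for all z ∈ D: ν(z)|φ'(z) - ψ'(z)| ≤ 2·|ν(z)φ'(z)/(1-|φ(z)|²) - ν(z)ψ'(z)/(1-|ψ(z)|²)| + 4·ρ(φ(z),ψ(z))·ν(z)|φ'(z)|/(1-|φ(z)|²), where ρ is the pseudo-hyperbolic distance. -/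
set_option autoImplicit false

open Metric Complex

/-! Write `s = 1 - |φ|²`, `t = 1 - |ψ|²`. The identity
`ν(φ' - ψ') = t (νφ'/s - νψ'/t) + (s - t) νφ'/s` splits the left side into the two terms
of the bound, with `t ≤ 1` and `|s - t| = ||φ|² - |ψ|²| ≤ 2|φ - ψ| ≤ 4 ρ(φ, ψ)`, the last step
because `|1 - conj ψ φ| ≤ 2`. -/

noncomputable def pseudoHyperbolicDist (z w : ℂ) : ℝ :=
  ‖(z - w) / (1 - (starRingEnd ℂ) w * z)‖

lemma norm_sub_le_norm_mul_norm_div_sub_div_add {𝕜 : Type*} [NormedField 𝕜] {s t : 𝕜}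
    (hs : s ≠ 0) (ht : t ≠ 0) (x y : 𝕜) :
    ‖x - y‖ ≤ ‖t‖ * ‖x / s - y / t‖ + ‖s - t‖ * ‖x / s‖ := by
  have split : x - y = t * (x / s - y / t) + (s - t) * (x / s) := by
    field_simp
    ring
  rw [split, ← norm_mul, ← norm_mul]
  exact norm_add_le _ _

lemma abs_norm_sq_sub_norm_sq_le {E : Type*} [SeminormedAddCommGroup E] {a b : E}
    (ha : ‖a‖ ≤ 1) (hb : ‖b‖ ≤ 1) : |‖a‖ ^ 2 - ‖b‖ ^ 2| ≤ 2 * ‖a - b‖ := by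
  have hab := abs_norm_sub_norm_le a b
  calc |‖a‖ ^ 2 - ‖b‖ ^ 2| = |‖a‖ - ‖b‖| * (‖a‖ + ‖b‖) := by
        rw [sq_sub_sq, abs_mul, abs_of_nonneg (by positivity : 0 ≤ ‖a‖ + ‖b‖), mul_comm]
    _ ≤ ‖a - b‖ * 2 := by gcongr; linarith
    _ = 2 * ‖a - b‖ := mul_comm _ _

lemma norm_sub_le_two_mul_pseudoHyperbolicDist {a b : ℂ} (ha : ‖a‖ < 1) (hb : ‖b‖ < 1) :
    ‖a - b‖ ≤ 2 * pseudoHyperbolicDist a b := by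
  have hprod : ‖(starRingEnd ℂ) b * a‖ < 1 := by
    rw [norm_mul, RCLike.norm_conj]
    nlinarith [norm_nonneg a, norm_nonneg b]
  have hden : 1 - (starRingEnd ℂ) b * a ≠ 0 := by
    rw [sub_ne_zero]
    rintro h
    simp [← h] at hprod
  have hden_le : ‖1 - (starRingEnd ℂ) b * a‖ ≤ 2 := by
    linarith [norm_sub_le (1 : ℂ) ((starRingEnd ℂ) b * a), norm_one (α := ℂ)]
  calc ‖a - b‖ = pseudoHyperbolicDist a b * ‖1 - (starRingEnd ℂ) b * a‖ := by
        rw [pseudoHyperbolicDist, ← norm_mul, div_mul_cancel₀ _ hden]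
    _ ≤ pseudoHyperbolicDist a b * 2 := by gcongr; exact norm_nonneg _
    _ = 2 * pseudoHyperbolicDist a b := mul_comm _ _

lemma abs_norm_sq_sub_norm_sq_le_four_mul_pseudoHyperbolicDist {a b : ℂ}
    (ha : ‖a‖ < 1) (hb : ‖b‖ < 1) :
    |‖a‖ ^ 2 - ‖b‖ ^ 2| ≤ 4 * pseudoHyperbolicDist a b := by
  linarith [abs_norm_sq_sub_norm_sq_le ha.le hb.le,
    norm_sub_le_two_mul_pseudoHyperbolicDist ha hb]

theorem stmt_15_general (φ ψ : ℂ → ℂ) (ν : ℂ → ℝ)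
    (hφm : ∀ z ∈ ball (0:ℂ) 1, φ z ∈ ball (0:ℂ) 1)
    (hψm : ∀ z ∈ ball (0:ℂ) 1, ψ z ∈ ball (0:ℂ) 1)
    (hν : ∀ z ∈ ball (0:ℂ) 1, 0 < ν z) :
    ∀ z ∈ ball (0:ℂ) 1,
      ν z * ‖deriv φ z - deriv ψ z‖ ≤
        2 * ‖((ν z : ℝ) : ℂ) * deriv φ z / ((1 - ‖φ z‖ ^ 2 : ℝ) : ℂ) -
              ((ν z : ℝ) : ℂ) * deriv ψ z / ((1 - ‖ψ z‖ ^ 2 : ℝ) : ℂ)‖ +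
          4 * ‖(φ z - ψ z) / (1 - (starRingEnd ℂ) (ψ z) * φ z)‖ *
            (ν z * ‖deriv φ z‖ / (1 - ‖φ z‖ ^ 2)) := by
  intro z hz
  have ha : ‖φ z‖ < 1 := mem_ball_zero_iff.mp (hφm z hz)
  have hb : ‖ψ z‖ < 1 := mem_ball_zero_iff.mp (hψm z hz)
  have hn := (hν z hz).le
  have hs : 0 < 1 - ‖φ z‖ ^ 2 := by nlinarith [norm_nonneg (φ z)]
  have ht : 0 < 1 - ‖ψ z‖ ^ 2 := by nlinarith [norm_nonneg (ψ z)]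
  have hst : ‖((1 - ‖φ z‖ ^ 2 : ℝ) : ℂ) - ((1 - ‖ψ z‖ ^ 2 : ℝ) : ℂ)‖
      ≤ 4 * pseudoHyperbolicDist (φ z) (ψ z) := by
    rw [← ofReal_sub, norm_real, Real.norm_eq_abs, abs_sub_comm]
    simpa using abs_norm_sq_sub_norm_sq_le_four_mul_pseudoHyperbolicDist ha hb
  calc ν z * ‖deriv φ z - deriv ψ z‖ = ‖(ν z : ℂ) * deriv φ z - (ν z : ℂ) * deriv ψ z‖ := by
        rw [← mul_sub, norm_mul, norm_real, Real.norm_of_nonneg hn]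
    _ ≤ _ := norm_sub_le_norm_mul_norm_div_sub_div_add (ofReal_ne_zero.mpr hs.ne')
        (ofReal_ne_zero.mpr ht.ne') _ _
    _ ≤ _ := by
      rw [norm_div (_ * _), norm_mul, norm_real, norm_real, norm_real,
        Real.norm_of_nonneg hn, Real.norm_of_nonneg hs.le, Real.norm_of_nonneg ht.le]
      gcongr
      · linarith [sq_nonneg ‖ψ z‖]
      · exact hst

/-- Pointwise estimate of `ν|φ'-ψ'|` by the two quantities controlling the difference
of composition operators. -/
theorem stmt_15 (φ ψ : ℂ → ℂ) (ν : ℂ → ℝ)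
    (hφ : DifferentiableOn ℂ φ (ball (0:ℂ) 1))
    (hψ : DifferentiableOn ℂ ψ (ball (0:ℂ) 1))
    (hφm : ∀ z ∈ ball (0:ℂ) 1, φ z ∈ ball (0:ℂ) 1)
    (hψm : ∀ z ∈ ball (0:ℂ) 1, ψ z ∈ ball (0:ℂ) 1)
    (hν : ∀ z ∈ ball (0:ℂ) 1, 0 < ν z) :
    ∀ z ∈ ball (0:ℂ) 1,
      ν z * ‖deriv φ z - deriv ψ z‖ ≤
        2 * ‖((ν z : ℝ) : ℂ) * deriv φ z / ((1 - ‖φ z‖ ^ 2 : ℝ) : ℂ) -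
              ((ν z : ℝ) : ℂ) * deriv ψ z / ((1 - ‖ψ z‖ ^ 2 : ℝ) : ℂ)‖ +
          4 * ‖(φ z - ψ z) / (1 - (starRingEnd ℂ) (ψ z) * φ z)‖ *
            (ν z * ‖deriv φ z‖ / (1 - ‖φ z‖ ^ 2)) :=
  stmt_15_general φ ψ ν hφm hψm hν
end

section
/- Let a_n, b_n, r_n be sequences of nonnegative reals with r_n < 1 for all n. Suppose |a_n - b_n(1-r_n²)| → 0 and a_n·r_n·(1-r_n²) → 0 as n → ∞. If a_n·r_n does not converge to 0, then (along a subsequence where a_n r_n is bounded away from 0) 1 - r_n² → 0 and hence a_n → 0, a contradiction; therefore a_n·r_n → 0. -/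
/-!
With `t = 1 - r²` one has `(a - b t) + t (b - a t) = a r² (2 - r²) ≥ a r²`, so the first two
hypotheses force `a r² → 0`. Then `a r = a r t + a r³` with `0 ≤ a r³ ≤ a r²`, and the fourth
hypothesis gives `a r → 0`. The statement for `b` is the same argument with `a` and `b` swapped.
-/

set_option autoImplicit false

open Filter Topology

lemma mul_sq_le_abs_sub_add_abs_sub {a r : ℝ} (b : ℝ) (ha : 0 ≤ a) (hr : r ^ 2 ≤ 1) :
    a * r ^ 2 ≤ |a - b * (1 - r ^ 2)| + |b - a * (1 - r ^ 2)| := by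
  have ht0 : 0 ≤ 1 - r ^ 2 := sub_nonneg.mpr hr
  have ht1 : 1 - r ^ 2 ≤ 1 := sub_le_self _ (sq_nonneg r)
  calc a * r ^ 2 ≤ a * r ^ 2 * (2 - r ^ 2) := le_mul_of_one_le_right (by positivity) (by linarith)
    _ = (a - b * (1 - r ^ 2)) + (1 - r ^ 2) * (b - a * (1 - r ^ 2)) := by ring
    _ ≤ |a - b * (1 - r ^ 2)| + (1 - r ^ 2) * |b - a * (1 - r ^ 2)| :=
      add_le_add (le_abs_self _) (mul_le_mul_of_nonneg_left (le_abs_self _) ht0)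
    _ ≤ |a - b * (1 - r ^ 2)| + |b - a * (1 - r ^ 2)| :=
      add_le_add_right (mul_le_of_le_one_left (abs_nonneg _) ht1) _

theorem tendsto_mul_nhds_zero_of_tendsto_abs_sub_mul_one_sub_sq {a b r : ℕ → ℝ}
    (ha : ∀ n, 0 ≤ a n) (hr0 : ∀ n, 0 ≤ r n) (hr1 : ∀ n, r n < 1)
    (hab : Tendsto (fun n => |a n - b n * (1 - r n ^ 2)|) atTop (𝓝 0))
    (hba : Tendsto (fun n => |b n - a n * (1 - r n ^ 2)|) atTop (𝓝 0))
    (har : Tendsto (fun n => a n * r n * (1 - r n ^ 2)) atTop (𝓝 0)) :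
    Tendsto (fun n => a n * r n) atTop (𝓝 0) := by
  have hr_sq (n : ℕ) : r n ^ 2 ≤ 1 := pow_le_one₀ (hr0 n) (hr1 n).le
  have hsq : Tendsto (fun n => a n * r n ^ 2) atTop (𝓝 0) :=
    squeeze_zero (fun n => mul_nonneg (ha n) (sq_nonneg _))
      (fun n => mul_sq_le_abs_sub_add_abs_sub (b n) (ha n) (hr_sq n))
      (by simpa using hab.add hba)
  have hcube : Tendsto (fun n => a n * r n ^ 3) atTop (𝓝 0) := by
    refine squeeze_zero (fun n => mul_nonneg (ha n) (pow_nonneg (hr0 n) 3)) (fun n => ?_) hsq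
    exact mul_le_mul_of_nonneg_left (pow_le_pow_of_le_one (hr0 n) (hr1 n).le (by norm_num)) (ha n)
  simpa using (har.add hcube).congr fun n => by ring

/-- Abstract limit argument from the compactness proof: the four vanishing conditions
force `aₙrₙ → 0` and `bₙrₙ → 0`. -/
theorem stmt_17 (a b r : ℕ → ℝ)
    (ha : ∀ n, 0 ≤ a n) (hb : ∀ n, 0 ≤ b n) (hr0 : ∀ n, 0 ≤ r n) (hr1 : ∀ n, r n < 1)
    (h1 : Filter.Tendsto (fun n => |a n - b n * (1 - r n ^ 2)|) Filter.atTop (nhds 0))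
    (h2 : Filter.Tendsto (fun n => |b n - a n * (1 - r n ^ 2)|) Filter.atTop (nhds 0))
    (h3 : Filter.Tendsto (fun n => b n * r n * (1 - r n ^ 2)) Filter.atTop (nhds 0))
    (h4 : Filter.Tendsto (fun n => a n * r n * (1 - r n ^ 2)) Filter.atTop (nhds 0)) :
    Filter.Tendsto (fun n => a n * r n) Filter.atTop (nhds 0) ∧
      Filter.Tendsto (fun n => b n * r n) Filter.atTop (nhds 0) :=
  ⟨tendsto_mul_nhds_zero_of_tendsto_abs_sub_mul_one_sub_sq ha hr0 hr1 h1 h2 h4,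
    tendsto_mul_nhds_zero_of_tendsto_abs_sub_mul_one_sub_sq hb hr0 hr1 h2 h1 h3⟩
end
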